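/- If A and C are bounded linear operators on a complex Hilbert space with A positive and invertible and C self-adjoint, then the spectrum of the product AC is contained in the real line. -/

import Mathlib

open scoped InnerProductSpace
open ContinuousLinearMap

/-!
With `s = √a`, the product `a * c = s * (s * c)` has the same nonzero spectrum as
`(s * c) * s = s * c * s`, which is self-adjoint and so has real spectrum; `0` is real anyway.
-/

theorem CStarAlgebra.im_eq_zero_of_mem_spectrum_nonneg_mul_selfAdjoint
    {𝒜 : Type*} [CStarAlgebra 𝒜] [PartialOrder 𝒜] [StarOrderedRing 𝒜]
    {a c : 𝒜} (ha : 0 ≤ a) (hc : IsSelfAdjoint c) {z : ℂ} (hz : z ∈ spectrum ℂ (a * c)) :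
    z.im = 0 := by
  rcases eq_or_ne z 0 with rfl | hz₀
  · rfl
  set s := CFC.sqrt a
  have hs : IsSelfAdjoint s := IsSelfAdjoint.of_nonneg (CFC.sqrt_nonneg a)
  have hsc : IsSelfAdjoint (s * c * s) := by
    simpa only [hs.star_eq] using hc.conjugate s
  have hz' : z ∈ spectrum ℂ (a * c) \ {0} := ⟨hz, hz₀⟩
  rw [← CFC.sqrt_mul_sqrt_self a, mul_assoc, spectrum.nonzero_mul_comm] at hz'
  exact hsc.im_eq_zero_of_mem_spectrum hz'.1

theorem ContinuousLinearMap.nonneg_of_re_inner_self_ge_mul_norm_sq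
    {𝕜 E : Type*} [RCLike 𝕜] [NormedAddCommGroup E] [InnerProductSpace 𝕜 E] [CompleteSpace E]
    {A : E →L[𝕜] E} (hA : IsSelfAdjoint A) {c : ℝ} (hc : 0 ≤ c)
    (hAc : ∀ x : E, c * ‖x‖ ^ 2 ≤ RCLike.re ⟪A x, x⟫_𝕜) : 0 ≤ A := by
  rw [nonneg_iff_isPositive, isPositive_def']
  exact ⟨hA, fun x => (mul_nonneg hc (sq_nonneg ‖x‖)).trans (hAc x)⟩

/-- If `A` is positive and invertible (self-adjoint and bounded below) and `C` is
self-adjoint, then the spectrum of `AC` is real. -/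
theorem spectrum_posMul_selfAdjoint_real
    {H : Type*} [NormedAddCommGroup H] [InnerProductSpace ℂ H] [CompleteSpace H]
    (A C : H →L[ℂ] H)
    (hA : IsSelfAdjoint A) (c : ℝ) (hc : 0 < c)
    (hAc : ∀ x : H, c * ‖x‖ ^ 2 ≤ (⟪A x, x⟫_ℂ).re)
    (hC : IsSelfAdjoint C) :
    ∀ z ∈ spectrum ℂ (A ∘L C), z.im = 0 :=
  fun _ hz => CStarAlgebra.im_eq_zero_of_mem_spectrum_nonneg_mul_selfAdjoint
    (nonneg_of_re_inner_self_ge_mul_norm_sq hA hc.le hAc) hC hz
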